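/- Let G be the group with presentation ⟨s₁,s₂,s₃,h | [sₖ,h] for 1≤k≤3, s₁³h, s₂³h, s₃³h, s₁s₂s₃h⟩. Then there is exactly one surjective homomorphism φ : G → ℤ/2; it satisfies φ(s₁)=φ(s₂)=φ(s₃)=φ(h)=1, and it factors through ℤ via the homomorphism ψ with ψ(sₖ)=1 and ψ(h)=-3. -/

import Mathlib

open FreeGroup

/-!
Each relator `sₖ³h` forces `φ(sₖ) = φ(h)` for any homomorphism `φ` into a group of exponent
dividing 2 (there `a³ = a` and `a⁻¹ = a`), so such a `φ` is determined by `φ(h)`. Into `ℤ/2`,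
surjectivity rules out `φ(h) = 0`, leaving only `φ(h) = 1`. The map `ψ` with `ψ(sₖ) = 1`,
`ψ(h) = -3` kills all relators, and since `1` and `-3` are odd, `ψ mod 2` is that unique `φ`.
-/

def relsM3 : Set (FreeGroup (Fin 4)) :=
  { of 0 * of 3 * (of 0)⁻¹ * (of 3)⁻¹,
    of 1 * of 3 * (of 1)⁻¹ * (of 3)⁻¹,
    of 2 * of 3 * (of 2)⁻¹ * (of 3)⁻¹,
    of 0 ^ 3 * of 3, of 1 ^ 3 * of 3, of 2 ^ 3 * of 3,
    of 0 * of 1 * of 2 * of 3 }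

def mod2 : Multiplicative ℤ →* Multiplicative (ZMod 2) :=
  AddMonoidHom.toMultiplicative (Int.castAddHom (ZMod 2))

lemma eq_of_pow_three_mul_eq_one {H : Type*} [Group H] (hH : ∀ x : H, x ^ 2 = 1) {a b : H}
    (h : a ^ 3 * b = 1) : a = b := by
  have hab : a * b = 1 := by rwa [pow_succ, hH, one_mul] at h
  rw [eq_inv_of_mul_eq_one_left hab, inv_eq_of_mul_eq_one_right (by rw [← sq, hH])]

namespace M3

local notation "G" => PresentedGroup relsM3

lemma of_pow_three_mul_of_three (k : Fin 3) :
    (PresentedGroup.of k.castSucc : G) ^ 3 * PresentedGroup.of 3 = 1 := by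
  have hmem : of k.castSucc ^ 3 * of 3 ∈ relsM3 := by
    fin_cases k <;> simp [relsM3]
  rw [← PresentedGroup.one_of_mem hmem, _root_.map_mul, map_pow]
  rfl

section ExponentTwo

variable {H : Type*} [Group H] (hH : ∀ x : H, x ^ 2 = 1)
include hH

lemma map_of_eq_map_of_three (φ : G →* H) (i : Fin 4) :
    φ (PresentedGroup.of i) = φ (PresentedGroup.of 3) := by
  induction i using Fin.lastCases with
  | last => rfl
  | cast k =>
    apply eq_of_pow_three_mul_eq_one hH
    rw [← map_pow, ← _root_.map_mul, of_pow_three_mul_of_three, _root_.map_one]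

lemma ext_of_three {φ φ' : G →* H} (h : φ (PresentedGroup.of 3) = φ' (PresentedGroup.of 3)) :
    φ = φ' :=
  PresentedGroup.ext fun i => by
    rw [map_of_eq_map_of_three hH, map_of_eq_map_of_three hH φ', h]

lemma map_of_three_ne_one_of_surjective [Nontrivial H] {φ : G →* H}
    (hφ : Function.Surjective φ) : φ (PresentedGroup.of 3) ≠ 1 := by
  intro h1
  have : φ = 1 := ext_of_three hH (by rw [h1, MonoidHom.one_apply])
  obtain ⟨x, hx⟩ := exists_ne (1 : H)
  obtain ⟨g, rfl⟩ := hφ x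
  exact hx (by rw [this, MonoidHom.one_apply])

end ExponentTwo

def psiGens : Fin 4 → Multiplicative ℤ :=
  ![.ofAdd 1, .ofAdd 1, .ofAdd 1, .ofAdd (-3)]

lemma psiGens_rels : ∀ r ∈ relsM3, FreeGroup.lift psiGens r = 1 := by
  simp only [relsM3, Set.mem_insert_iff, Set.mem_singleton_iff]
  rintro r (rfl | rfl | rfl | rfl | rfl | rfl | rfl) <;> decide

def psi : G →* Multiplicative ℤ := PresentedGroup.toGroup psiGens_rels

lemma psi_of (i : Fin 4) : psi (PresentedGroup.of i) = psiGens i :=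
  PresentedGroup.toGroup.of psiGens_rels

lemma zmod_two_pow_two (x : Multiplicative (ZMod 2)) : x ^ 2 = 1 := by
  revert x; decide

lemma zmod_two_eq_one_or (x : Multiplicative (ZMod 2)) : x = 1 ∨ x = .ofAdd 1 := by
  revert x; decide

lemma mod2_comp_psi_of (i : Fin 4) :
    mod2.comp psi (PresentedGroup.of i) = .ofAdd (1 : ZMod 2) := by
  rw [MonoidHom.comp_apply, psi_of]
  fin_cases i <;> decide

lemma eq_mod2_comp_psi_of_surjective {φ : G →* Multiplicative (ZMod 2)}
    (hφ : Function.Surjective φ) : φ = mod2.comp psi := by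
  apply ext_of_three zmod_two_pow_two
  rw [mod2_comp_psi_of]
  exact (zmod_two_eq_one_or _).resolve_left
    (map_of_three_ne_one_of_surjective zmod_two_pow_two hφ)

lemma mod2_comp_psi_surjective : Function.Surjective (mod2.comp psi) := by
  intro x
  rcases zmod_two_eq_one_or x with rfl | rfl
  · exact ⟨1, map_one _⟩
  · exact ⟨_, mod2_comp_psi_of 0⟩

end M3

open M3 in
theorem stmt5 :
    Nat.card {φ : PresentedGroup relsM3 →* Multiplicative (ZMod 2) //
        Function.Surjective φ} = 1 ∧
    ∀ φ : PresentedGroup relsM3 →* Multiplicative (ZMod 2), Function.Surjective φ →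
      (∀ i : Fin 4, φ (PresentedGroup.of i) = Multiplicative.ofAdd (1 : ZMod 2)) ∧
      ∃ ψ : PresentedGroup relsM3 →* Multiplicative ℤ,
        (∀ k : Fin 3, ψ (PresentedGroup.of k.castSucc) = Multiplicative.ofAdd (1 : ℤ)) ∧
        ψ (PresentedGroup.of 3) = Multiplicative.ofAdd (-3 : ℤ) ∧
        φ = mod2.comp ψ := by
  refine ⟨?_, fun φ hφ => ?_⟩
  · rw [Nat.card_eq_one_iff_exists]
    exact ⟨⟨_, mod2_comp_psi_surjective⟩,
      fun φ => Subtype.ext (eq_mod2_comp_psi_of_surjective φ.2)⟩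
  · have hφ_eq := eq_mod2_comp_psi_of_surjective hφ
    refine ⟨fun i => hφ_eq ▸ mod2_comp_psi_of i, psi, fun k => ?_, psi_of 3, hφ_eq⟩
    rw [psi_of]
    fin_cases k <;> rfl
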